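/- arXiv:1606.05480 — 2 statements merged into one kernel-verified Lean document; each statement's English description precedes it below -/
import Mathlib

section
/- Let d_0 = 0, d_1 = 1, and d_k = 2^{2k−2} + 2^{2k−4} + d_{k−1} + 7·d_{k−2} for k ≥ 2, and set n = 2^k, α = (1−√29)/2, β = (1+√29)/2. Then for all k ≥ 0, d_k = n² − ((√29+5)/(2√29))·n^{log₂ β} − (−1)^k·((√29−5)/(2√29))·n^{log₂(−α)}. In particular d_k = n² − Ω(n^{1.673}). -/
open SimpleGraph

/-- First-Fit (greedy) coloring of `G` with respect to the vertex ordering given by the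
injective position function `ord` (vertex `u` comes before `v` iff `ord u < ord v`).
Each vertex receives the smallest positive integer not used on earlier neighbors. -/
noncomputable def firstFit {V : Type*} (G : SimpleGraph V) (ord : V → ℕ) : V → ℕ :=
  (InvImage.wf ord Nat.lt_wfRel.wf).fix
    (fun v ih => sInf {c : ℕ | 1 ≤ c ∧ ∀ u, ∀ h : ord u < ord v, G.Adj u v → ih u h ≠ c})

/-- `FFColors G ord` is the number of colors used by the First-Fit coloring. -/
noncomputable def FFColors {V : Type*} [Fintype V] (G : SimpleGraph V) (ord : V → ℕ) : ℕ :=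
  (Finset.univ.image (firstFit G ord)).card

open Classical in
/-- First-Fit coloring of `(G, ord)` subject to the pre-coloring `C₀` on the set `S`:
vertices of `S` keep their pre-assigned colors and are skipped by the scan; every other
vertex receives the smallest positive integer not already assigned (or pre-assigned)
to a neighbor. -/
noncomputable def firstFitWith {V : Type*} (G : SimpleGraph V) (ord : V → ℕ)
    (S : Set V) (C₀ : V → ℕ) : V → ℕ :=
  (InvImage.wf ord Nat.lt_wfRel.wf).fix
    (fun v ih =>
      if v ∈ S then C₀ v
      else sInf {c : ℕ | 1 ≤ c ∧ (∀ u, G.Adj u v → u ∈ S → C₀ u ≠ c) ∧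
        ∀ u, ∀ h : ord u < ord v, G.Adj u v → u ∉ S → ih u h ≠ c})

/-- Position function of the lexicographic order on `V × W` induced by the position
functions `σ` on `V` and `σ'` on `W` (for injective `σ, σ'`: `(u,v)` comes before
`(u',v')` iff `σ u < σ u'`, or `u = u'` and `σ' v < σ' v'`). -/
noncomputable def lexPos {V W : Type*} [Fintype W] (σ : V → ℕ) (σ' : W → ℕ) : V × W → ℕ :=
  fun p => σ p.1 * (Finset.univ.sup σ' + 1) + σ' p.2

/-- A proper coloring with colors in the positive integers. -/
def IsProperColoring {V : Type*} (G : SimpleGraph V) (C : V → ℕ) : Prop :=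
  (∀ v, 1 ≤ C v) ∧ ∀ ⦃u v⦄, G.Adj u v → C u ≠ C v

/-- `D` is a `(C, ord)`-descent: `D = {v} ∪ N` where `C v = y`, `x < y` is a (positive)
color, `N` is the set of neighbors of `v` of color `x`, and every `u ∈ N` comes after
`v` in the order. -/
def IsDescent {V : Type*} (G : SimpleGraph V) (ord : V → ℕ) (C : V → ℕ) (D : Set V) : Prop :=
  ∃ v x, 1 ≤ x ∧ x < C v ∧
    (∀ u, G.Adj u v → C u = x → ord v < ord u) ∧
    D = insert v {u | G.Adj u v ∧ C u = x}

/-- The Grundy number: the maximum of `FFColors G ord` over all vertex orderings. -/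
noncomputable def grundy {V : Type*} [Fintype V] (G : SimpleGraph V) : ℕ :=
  sSup {n | ∃ ord : V → ℕ, Function.Injective ord ∧ FFColors G ord = n}

/-- The independence number of `G`. -/
noncomputable def indepNum {V : Type*} [Fintype V] (G : SimpleGraph V) : ℕ :=
  sSup {n | ∃ s : Finset V, (∀ u ∈ s, ∀ v ∈ s, ¬ G.Adj u v) ∧ s.card = n}

/-- An `m × n` Latin rectangle: entries in `{1, …, n}`, no repeats in rows or columns. -/
def IsLatinRectangle {m n : ℕ} (R : Fin m → Fin n → ℕ) : Prop :=
  (∀ i j, R i j ∈ Finset.Icc 1 n) ∧ (∀ i, Function.Injective (R i)) ∧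
    (∀ j, Function.Injective (fun i => R i j))

/-- `S` is a greedy defining set of the rectangle `R` (cells scanned in lexicographic,
i.e. row-by-row, order): the greedy completion, which skips the cells of `S` (fixed to
their values in `R`) and places in each other cell the smallest positive integer not yet
appearing in its row or column, reproduces `R`.  This is First-Fit on the rook's graph
`K_m □ K_n` subject to the pre-coloring of `S` by `R`. -/
noncomputable def IsRectGDS {m n : ℕ} (R : Fin m → Fin n → ℕ) (S : Set (Fin m × Fin n)) : Prop :=
  firstFitWith ((⊤ : SimpleGraph (Fin m)).boxProd (⊤ : SimpleGraph (Fin n)))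
    (lexPos Fin.val Fin.val) S (fun p => R p.1 p.2) = fun p => R p.1 p.2

/-- The Latin square `L_k` of order `2^k`: the entry in row `i`, column `j` is
`2^k - (i XOR j)`; equivalently the `k`-fold tensor product of `[[2,1],[1,2]]`. -/
def Lsquare (k : ℕ) : Fin (2 ^ k) → Fin (2 ^ k) → ℕ :=
  fun i j => 2 ^ k - (i.val ^^^ j.val)

lemma two_pow_pow_aux (y : ℝ) (k : ℕ) : ((2:ℝ)^k) ^ y = ((2:ℝ) ^ y) ^ k := by
  rw [← Real.rpow_natCast 2 k, ← Real.rpow_mul (by norm_num), mul_comm,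
    Real.rpow_mul (by norm_num), Real.rpow_natCast]

lemma pow_logb_aux (x : ℝ) (hx : 0 < x) (k : ℕ) :
    ((2:ℝ)^k) ^ (Real.logb 2 x) = x ^ k := by
  rw [two_pow_pow_aux, Real.rpow_logb (by norm_num) (by norm_num) hx]

/-- The sequence `d_k` (with `d_0 = 0`, `d_1 = 1`,
`d_k = 2^(2k-2) + 2^(2k-4) + d_(k-1) + 7 d_(k-2)`) satisfies, with `n = 2^k`,
`α = (1-√29)/2`, `β = (1+√29)/2`,
`d_k = n² - ((√29+5)/(2√29)) n^(log₂ β) - (-1)^k ((√29-5)/(2√29)) n^(log₂(-α))`;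
in particular `d_k = n² - Ω(n^1.673)`. -/
theorem dk_closed_formula (d : ℕ → ℕ) (hd0 : d 0 = 0) (hd1 : d 1 = 1)
    (hdk : ∀ k, 2 ≤ k →
      d k = 2 ^ (2 * k - 2) + 2 ^ (2 * k - 4) + d (k - 1) + 7 * d (k - 2)) :
    (∀ k : ℕ, (d k : ℝ) =
        ((2 : ℝ) ^ k) ^ 2
        - ((Real.sqrt 29 + 5) / (2 * Real.sqrt 29)) *
            ((2 : ℝ) ^ k) ^ (Real.logb 2 ((1 + Real.sqrt 29) / 2))
        - (-1 : ℝ) ^ k * ((Real.sqrt 29 - 5) / (2 * Real.sqrt 29)) *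
            ((2 : ℝ) ^ k) ^ (Real.logb 2 (-((1 - Real.sqrt 29) / 2)))) ∧
      ∃ c : ℝ, 0 < c ∧ ∀ k : ℕ,
        c * ((2 : ℝ) ^ k) ^ (1.673 : ℝ) ≤ ((2 : ℝ) ^ k) ^ 2 - d k := by
  set s := Real.sqrt 29 with hs
  have hs2 : s ^ 2 = 29 := Real.sq_sqrt (by norm_num)
  have hs0 : (0:ℝ) ≤ s := Real.sqrt_nonneg 29
  have hs5 : (5:ℝ) < s := by nlinarith
  have hsne : s ≠ 0 := by linarith
  have hb2 : ((1+s)/2) ^ 2 = (1+s)/2 + 7 := by linear_combination hs2 / 4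
  have ha2 : ((1-s)/2) ^ 2 = (1-s)/2 + 7 := by linear_combination hs2 / 4
  have key : ∀ k : ℕ, (d k : ℝ) = 4 ^ k
      - ((s+5)/(2*s)) * ((1+s)/2) ^ k - ((s-5)/(2*s)) * ((1-s)/2) ^ k := by
    have main : ∀ k : ℕ,
        ((d k : ℝ) = 4 ^ k - ((s+5)/(2*s)) * ((1+s)/2) ^ k - ((s-5)/(2*s)) * ((1-s)/2) ^ k) ∧
        ((d (k+1) : ℝ) = 4 ^ (k+1) - ((s+5)/(2*s)) * ((1+s)/2) ^ (k+1)
          - ((s-5)/(2*s)) * ((1-s)/2) ^ (k+1)) := by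
      intro k
      induction k with
      | zero =>
        constructor
        · rw [hd0]; push_cast; field_simp; ring
        · rw [hd1]; push_cast; field_simp; ring
      | succ n ih =>
        refine ⟨ih.2, ?_⟩
        have hrec := hdk (n+2) (by omega)
        rw [show 2*(n+2)-2 = 2*n+2 by omega, show 2*(n+2)-4 = 2*n by omega,
          show n+2-1 = n+1 by omega, show n+2-2 = n by omega] at hrec
        have hcast : (d (n+2) : ℝ) = 2^(2*n+2) + 2^(2*n) + (d (n+1):ℝ) + 7 * (d n:ℝ) := by
          rw [hrec]; push_cast; ring
        rw [hcast, ih.1, ih.2]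
        have e1 : (2:ℝ)^(2*n+2) = 4 * 4^n := by
          rw [pow_add, pow_mul]; norm_num; ring
        have e2 : (2:ℝ)^(2*n) = 4^n := by rw [pow_mul]; norm_num
        have eb : ((1+s)/2)^(n+2) = ((1+s)/2)^n * ((1+s)/2 + 7) := by
          rw [← hb2]; ring
        have ea : ((1-s)/2)^(n+2) = ((1-s)/2)^n * ((1-s)/2 + 7) := by
          rw [← ha2]; ring
        rw [e1, e2, show n+1+1 = n+2 by omega, eb, ea]
        ring
    exact fun k => (main k).1
  constructor
  · intro k
    have hbpos : (0:ℝ) < (1+s)/2 := by linarith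
    have hapos : (0:ℝ) < (s-1)/2 := by linarith
    rw [show -((1-s)/2) = (s-1)/2 by ring, pow_logb_aux _ hbpos, pow_logb_aux _ hapos, key k]
    have hneg : (-1:ℝ)^k * ((s-1)/2)^k = ((1-s)/2)^k := by
      rw [← mul_pow]; congr 1; ring
    have hsq : ((2:ℝ)^k)^2 = 4^k := by
      rw [← pow_mul, mul_comm, pow_mul]; norm_num
    rw [hsq]
    linear_combination ((s-5)/(2*s)) * hneg
  · refine ⟨5/s, by positivity, fun k => ?_⟩
    have hsq : ((2:ℝ)^k)^2 = 4^k := by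
      rw [← pow_mul, mul_comm, pow_mul]; norm_num
    rw [key k, hsq]
    have hβ : (3.192:ℝ) ≤ (1+s)/2 := by nlinarith
    have h2 : (2:ℝ)^(1.673:ℝ) ≤ (1+s)/2 := by
      have step1 : (2:ℝ)^(1.673:ℝ) ≤ (2:ℝ)^((77:ℝ)/46) :=
        Real.rpow_le_rpow_of_exponent_le (by norm_num) (by norm_num)
      have step2 : (2:ℝ)^((77:ℝ)/46) ≤ (1+s)/2 := by
        have hp : ((2:ℝ)^((77:ℝ)/46))^(46:ℕ) ≤ ((1+s)/2)^(46:ℕ) := by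
          have he : ((2:ℝ)^((77:ℝ)/46))^(46:ℕ) = (2:ℝ)^(77:ℕ) := by
            rw [← Real.rpow_natCast ((2:ℝ)^((77:ℝ)/46)) 46,
              ← Real.rpow_mul (by positivity)]
            norm_num
          rw [he]
          calc (2:ℝ)^(77:ℕ) ≤ (3.192:ℝ)^(46:ℕ) := by norm_num
            _ ≤ ((1+s)/2)^(46:ℕ) := pow_le_pow_left₀ (by norm_num) hβ 46
        exact le_of_pow_le_pow_left₀ (by norm_num) (by linarith) hp
      linarith
    have h1 : ((2:ℝ)^k)^(1.673:ℝ) ≤ ((1+s)/2)^k := by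
      rw [two_pow_pow_aux]
      exact pow_le_pow_left₀ (Real.rpow_nonneg (by norm_num) _) h2 k
    have habs : |(1-s)/2| ≤ (1+s)/2 := by
      rw [abs_le]; constructor <;> nlinarith
    have h3 : -(((1+s)/2)^k) ≤ ((1-s)/2)^k := by
      have := pow_le_pow_left₀ (abs_nonneg _) habs k
      rw [← abs_pow] at this
      have h4 := neg_abs_le (((1-s)/2)^k)
      linarith
    have hBnn : (0:ℝ) ≤ (s-5)/(2*s) := div_nonneg (by linarith) (by linarith)
    have h5 : (s-5)/(2*s) * (-(((1+s)/2)^k)) ≤ (s-5)/(2*s) * ((1-s)/2)^k :=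
      mul_le_mul_of_nonneg_left h3 hBnn
    have h6 : 5/s * ((2:ℝ)^k)^(1.673:ℝ) ≤ 5/s * ((1+s)/2)^k :=
      mul_le_mul_of_nonneg_left h1 (by positivity)
    have h7 : 5/s * ((1+s)/2)^k
        = ((s+5)/(2*s)) * ((1+s)/2)^k - ((s-5)/(2*s)) * ((1+s)/2)^k := by
      field_simp; ring
    nlinarith [h5, h6]
end

section
/- Let m_k denote the minimum cardinality of a greedy defining set of (L_k, lex). Then m_k ≥ 4·m_{k−1} for every k ≥ 1, and m_2 = 6. -/
open SimpleGraph

/-!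
Cut `L_{k+1}` into four blocks of size `2^k`: the block in position `(a, b)` is `L_k`, shifted
by `2^k` when `a = b`. A color that the greedy completion has to skip at a cell of a block is
witnessed in the same row or column, and the shift forces the witness into the same block
(cells of the other block in that line carry colors that are all too large or all too small);
"earlier in lexicographic order" is also preserved inside a block. Hence the trace of a greedy
defining set of `L_{k+1}` on each block is a greedy defining set of `L_k`, and
`m_{k+1} ≥ 4 m_k`.

For `m_2 = 6`: at the cells `(0,0), (0,1), (1,0), (1,1), (2,2)` of `L_2` the colors `1, 2, 2, 1, 3`
occur at no earlier cell of the same row or column, so a greedy defining set contains, for each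
of these cells, the cell itself or a cell of that color in its row or column. These five sets
of cells are pairwise disjoint, so a greedy defining set of at most five cells is a transversal
of them, and a finite check shows that no transversal is a greedy defining set.
-/

open Finset

open Classical in
theorem firstFitWith_apply {V : Type*} (G : SimpleGraph V) (ord : V → ℕ) (S : Set V)
    (C₀ : V → ℕ) (v : V) :
    firstFitWith G ord S C₀ v =
      if v ∈ S then C₀ v
      else sInf {c : ℕ | 1 ≤ c ∧ (∀ u, G.Adj u v → u ∈ S → C₀ u ≠ c) ∧
        ∀ u, ord u < ord v → G.Adj u v → u ∉ S → firstFitWith G ord S C₀ u ≠ c} :=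
  WellFounded.fix_eq _ _ _

theorem Nat.sInf_eq_iff_of_mem {s : Set ℕ} {n : ℕ} (hn : n ∈ s) :
    sInf s = n ↔ ∀ c < n, c ∉ s := by
  refine ⟨fun h c hc => Nat.notMem_of_lt_sInf (h ▸ hc), fun h => ?_⟩
  exact le_antisymm (Nat.sInf_le hn) (not_lt.mp fun hlt => h _ hlt (Nat.sInf_mem ⟨n, hn⟩))

section FirstFit

variable {V : Type*} {G : SimpleGraph V} {ord : V → ℕ} {S : Set V} {R : V → ℕ}

theorem firstFitWith_eq_sInf_of_agree {v : V} (hv : v ∉ S)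
    (hagree : ∀ u, ord u < ord v → firstFitWith G ord S R u = R u) :
    firstFitWith G ord S R v =
      sInf {c | 1 ≤ c ∧ ∀ u, G.Adj u v → (u ∈ S ∨ ord u < ord v) → R u ≠ c} := by
  rw [firstFitWith_apply, if_neg hv]
  congr 1
  ext c
  refine and_congr_right fun _ => ⟨fun ⟨hS, hE⟩ u hadj hu => ?_,
    fun h => ⟨fun u hadj huS => h u hadj (.inl huS),
      fun u hlt hadj _ => hagree u hlt ▸ h u hadj (.inr hlt)⟩⟩
  by_cases huS : u ∈ S
  · exact hS u hadj huS
  · exact hagree u (hu.resolve_left huS) ▸ hE u (hu.resolve_left huS) hadj huS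

theorem firstFitWith_eq_self_iff (hR : IsProperColoring G R) :
    firstFitWith G ord S R = R ↔
      ∀ v ∉ S, ∀ c, 1 ≤ c → c < R v → ∃ u, G.Adj u v ∧ (u ∈ S ∨ ord u < ord v) ∧ R u = c := by
  have hmem v : R v ∈ {c | 1 ≤ c ∧ ∀ u, G.Adj u v → (u ∈ S ∨ ord u < ord v) → R u ≠ c} :=
    ⟨hR.1 v, fun u hadj _ => hR.2 hadj⟩
  have hgap (v : V) : (∀ c < R v,
      c ∉ {c | 1 ≤ c ∧ ∀ u, G.Adj u v → (u ∈ S ∨ ord u < ord v) → R u ≠ c}) ↔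
      ∀ c, 1 ≤ c → c < R v → ∃ u, G.Adj u v ∧ (u ∈ S ∨ ord u < ord v) ∧ R u = c := by
    simp only [Set.mem_ofPred_eq, not_and, not_forall, not_not, exists_prop]
    exact forall_congr' fun _ => forall_comm
  constructor
  · intro hff v hv
    rw [← hgap, ← Nat.sInf_eq_iff_of_mem (hmem v), ← firstFitWith_eq_sInf_of_agree hv
      (fun u _ => congrFun hff u), hff]
  · intro h
    funext v
    induction v using (measure ord).wf.induction with
    | _ v ih =>
    by_cases hv : v ∈ S
    · simp [firstFitWith_apply, hv]
    · rw [firstFitWith_eq_sInf_of_agree hv ih, Nat.sInf_eq_iff_of_mem (hmem v), hgap]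
      exact h v hv

end FirstFit

section Rook

variable {m n : ℕ}

theorem lexPos_val_val (p : Fin m × Fin n) : lexPos Fin.val Fin.val p = p.1 * n + p.2 := by
  have := p.2.isLt
  have hsup : univ.sup (Fin.val : Fin n → ℕ) = n - 1 :=
    le_antisymm (Finset.sup_le fun i _ => by omega)
      (Finset.le_sup (f := Fin.val) (mem_univ ⟨n - 1, by omega⟩))
  simp only [lexPos, hsup]
  congr 2
  omega

theorem lexPos_mk_lt_mk_left_iff (i : Fin m) (j j' : Fin n) :
    lexPos Fin.val Fin.val (i, j) < lexPos Fin.val Fin.val (i, j') ↔ j < j' := by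
  simp only [lexPos_val_val, Fin.lt_def]
  omega

theorem lexPos_mk_lt_mk_right_iff (i i' : Fin m) (j : Fin n) :
    lexPos Fin.val Fin.val (i, j) < lexPos Fin.val Fin.val (i', j) ↔ i < i' := by
  simp only [lexPos_val_val, Fin.lt_def, Nat.add_lt_add_iff_right]
  exact Nat.mul_lt_mul_right j.pos

theorem IsLatinRectangle.isProperColoring {R : Fin m → Fin n → ℕ} (hR : IsLatinRectangle R) :
    IsProperColoring ((⊤ : SimpleGraph (Fin m)) □ (⊤ : SimpleGraph (Fin n)))
      fun p => R p.1 p.2 := by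
  refine ⟨fun p => (Finset.mem_Icc.mp (hR.1 p.1 p.2)).1, ?_⟩
  rintro ⟨i, j⟩ ⟨i', j'⟩ hadj
  rcases boxProd_adj.mp hadj with ⟨hi, rfl⟩ | ⟨hj, rfl⟩
  · exact (hR.2.2 j).ne hi
  · exact (hR.2.1 i).ne hj

def ColorBlocked (R : Fin m → Fin n → ℕ) (S : Set (Fin m × Fin n)) (p : Fin m × Fin n)
    (c : ℕ) : Prop :=
  (∃ j, R p.1 j = c ∧ ((p.1, j) ∈ S ∨ j < p.2)) ∨ ∃ i, R i p.2 = c ∧ ((i, p.2) ∈ S ∨ i < p.1)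

instance {R : Fin m → Fin n → ℕ} {S : Set (Fin m × Fin n)} [DecidablePred (· ∈ S)]
    {p : Fin m × Fin n} {c : ℕ} : Decidable (ColorBlocked R S p c) := by
  unfold ColorBlocked
  infer_instance

theorem exists_rook_adj_iff_colorBlocked {R : Fin m → Fin n → ℕ} {S : Set (Fin m × Fin n)}
    {p : Fin m × Fin n} {c : ℕ} (hc : c < R p.1 p.2) :
    (∃ u, ((⊤ : SimpleGraph (Fin m)) □ (⊤ : SimpleGraph (Fin n))).Adj u p ∧
      (u ∈ S ∨ lexPos Fin.val Fin.val u < lexPos Fin.val Fin.val p) ∧ R u.1 u.2 = c) ↔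
      ColorBlocked R S p c := by
  obtain ⟨i, j⟩ := p
  constructor
  · rintro ⟨⟨i', j'⟩, hadj, hu, rfl⟩
    rcases boxProd_adj.mp hadj with ⟨-, rfl⟩ | ⟨-, rfl⟩
    · exact .inr ⟨i', rfl, by rwa [lexPos_mk_lt_mk_right_iff] at hu⟩
    · exact .inl ⟨j', rfl, by rwa [lexPos_mk_lt_mk_left_iff] at hu⟩
  · rintro (⟨j', rfl, hu⟩ | ⟨i', rfl, hu⟩)
    · refine ⟨(i, j'), boxProd_adj.mpr (.inr ⟨?_, rfl⟩), by rwa [lexPos_mk_lt_mk_left_iff], rfl⟩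
      rintro rfl
      exact hc.false
    · refine ⟨(i', j), boxProd_adj.mpr (.inl ⟨?_, rfl⟩), by rwa [lexPos_mk_lt_mk_right_iff], rfl⟩
      rintro rfl
      exact hc.false

theorem isRectGDS_iff {R : Fin m → Fin n → ℕ} (hR : IsLatinRectangle R) {S : Set (Fin m × Fin n)} :
    IsRectGDS R S ↔ ∀ p ∉ S, ∀ c < R p.1 p.2, 1 ≤ c → ColorBlocked R S p c := by
  rw [IsRectGDS, firstFitWith_eq_self_iff hR.isProperColoring]
  refine forall₂_congr fun p _ => ⟨fun h c hc hc₁ => ?_, fun h c hc₁ hc => ?_⟩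
  · exact (exists_rook_adj_iff_colorBlocked hc).mp (h c hc₁ hc)
  · exact (exists_rook_adj_iff_colorBlocked hc).mpr (h c hc hc₁)

end Rook

theorem Nat.xor_add_two_pow_mul {i j k : ℕ} (hi : i < 2 ^ k) (hj : j < 2 ^ k) (a b : ℕ) :
    (i + 2 ^ k * a) ^^^ (j + 2 ^ k * b) = (i ^^^ j) + 2 ^ k * (a ^^^ b) := by
  rw [← Nat.mod_add_div ((i + 2 ^ k * a) ^^^ (j + 2 ^ k * b)) (2 ^ k), Nat.xor_mod_two_pow,
    Nat.xor_div_two_pow]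
  simp [Nat.add_mul_div_left, Nat.mod_eq_of_lt hi, Nat.mod_eq_of_lt hj, Nat.div_eq_of_lt hi,
    Nat.div_eq_of_lt hj]

section Lsquare

theorem Lsquare_isLatinRectangle (k : ℕ) : IsLatinRectangle (Lsquare k) := by
  refine ⟨fun i j => ?_, fun i j j' h => ?_, fun j i i' h => ?_⟩
  · have := Nat.xor_lt_two_pow i.2 j.2
    simp only [Lsquare, Finset.mem_Icc]
    omega
  · have := Nat.xor_lt_two_pow i.2 j.2
    have := Nat.xor_lt_two_pow i.2 j'.2
    simp only [Lsquare] at h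
    exact Fin.ext (Nat.xor_right_inj.mp (show i.val ^^^ j.val = i.val ^^^ j'.val by omega))
  · have := Nat.xor_lt_two_pow i.2 j.2
    have := Nat.xor_lt_two_pow i'.2 j.2
    simp only [Lsquare] at h
    exact Fin.ext (Nat.xor_left_inj.mp (show i.val ^^^ j.val = i'.val ^^^ j.val by omega))

theorem Lsquare_comm (k : ℕ) (i j : Fin (2 ^ k)) : Lsquare k i j = Lsquare k j i := by
  simp only [Lsquare, Nat.xor_comm]

def blockEquiv (k : ℕ) : Fin 2 × Fin (2 ^ k) ≃ Fin (2 ^ (k + 1)) :=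
  finProdFinEquiv.trans (finCongr (pow_succ' 2 k).symm)

theorem blockEquiv_val (k : ℕ) (a : Fin 2) (i : Fin (2 ^ k)) :
    (blockEquiv k (a, i) : ℕ) = i + 2 ^ k * a :=
  rfl

theorem blockEquiv_lt_blockEquiv_iff {k : ℕ} (a : Fin 2) (i j : Fin (2 ^ k)) :
    blockEquiv k (a, i) < blockEquiv k (a, j) ↔ i < j := by
  simp only [Fin.lt_def, blockEquiv_val, Nat.add_lt_add_iff_right]

theorem Lsquare_blockEquiv (k : ℕ) (a b : Fin 2) (i j : Fin (2 ^ k)) :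
    Lsquare (k + 1) (blockEquiv k (a, i)) (blockEquiv k (b, j)) =
      Lsquare k i j + if a = b then 2 ^ k else 0 := by
  have hij := Nat.xor_lt_two_pow i.2 j.2
  have hab : a.val ^^^ b.val = if a = b then 0 else 1 := by revert a b; decide
  simp only [Lsquare, blockEquiv_val, Nat.xor_add_two_pow_mul i.2 j.2, hab, pow_succ]
  split_ifs <;> omega

theorem exists_Lsquare_eq_of_Lsquare_succ_eq {k : ℕ} {a b : Fin 2} {i j : Fin (2 ^ k)} {c : ℕ}
    (hc₁ : 1 ≤ c) (hc : c ≤ 2 ^ k) {P : Fin (2 ^ (k + 1)) → Prop}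
    (h : ∃ J, Lsquare (k + 1) (blockEquiv k (a, i)) J = c + (if a = b then 2 ^ k else 0) ∧
      (P J ∨ J < blockEquiv k (b, j))) :
    ∃ j', Lsquare k i j' = c ∧ (P (blockEquiv k (b, j')) ∨ j' < j) := by
  obtain ⟨J, hJ, hJP⟩ := h
  obtain ⟨⟨b', j'⟩, rfl⟩ := (blockEquiv k).surjective J
  have hL := Finset.mem_Icc.mp ((Lsquare_isLatinRectangle k).1 i j')
  rw [Lsquare_blockEquiv] at hJ
  have hfin : ∀ x y z : Fin 2, (x = y ↔ x = z) → y = z := by decide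
  obtain rfl : b' = b := hfin a b' b (by
    split_ifs at hJ with h₁ h₂ h₂ <;>
      first | exact iff_of_true h₁ h₂ | exact iff_of_false h₁ h₂ | omega)
  exact ⟨j', by omega, by rwa [blockEquiv_lt_blockEquiv_iff] at hJP⟩

def quadrantEquiv (k : ℕ) :
    (Fin 2 × Fin 2) × (Fin (2 ^ k) × Fin (2 ^ k)) ≃ Fin (2 ^ (k + 1)) × Fin (2 ^ (k + 1)) :=
  (Equiv.prodProdProdComm _ _ _ _).trans ((blockEquiv k).prodCongr (blockEquiv k))

def quadrantTrace (k : ℕ) (S : Set (Fin (2 ^ (k + 1)) × Fin (2 ^ (k + 1))))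
    (q : Fin 2 × Fin 2) : Set (Fin (2 ^ k) × Fin (2 ^ k)) :=
  {p | quadrantEquiv k (q, p) ∈ S}

theorem IsRectGDS.quadrantTrace {k : ℕ} {S : Set (Fin (2 ^ (k + 1)) × Fin (2 ^ (k + 1)))}
    (hS : IsRectGDS (Lsquare (k + 1)) S) (q : Fin 2 × Fin 2) :
    IsRectGDS (Lsquare k) (quadrantTrace k S q) := by
  rw [isRectGDS_iff (Lsquare_isLatinRectangle (k + 1))] at hS
  rw [isRectGDS_iff (Lsquare_isLatinRectangle k)]
  obtain ⟨a, b⟩ := q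
  rintro ⟨i, j⟩ hp c (hc : c < Lsquare k i j) hc₁
  have hcle : c ≤ 2 ^ k := hc.le.trans (Finset.mem_Icc.mp ((Lsquare_isLatinRectangle k).1 i j)).2
  have hL := Lsquare_blockEquiv k a b i j
  rcases hS (blockEquiv k (a, i), blockEquiv k (b, j)) hp (c + if a = b then 2 ^ k else 0)
    (show _ < Lsquare (k + 1) (blockEquiv k (a, i)) (blockEquiv k (b, j)) by omega) (by omega)
    with hrow | hcol
  · exact .inl (exists_Lsquare_eq_of_Lsquare_succ_eq hc₁ hcle hrow)
  · simp_rw [Lsquare_comm _ _ (blockEquiv k (b, j)), @eq_comm _ a b] at hcol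
    obtain ⟨i', hi', hmem⟩ := exists_Lsquare_eq_of_Lsquare_succ_eq hc₁ hcle hcol
      (P := fun I => (I, blockEquiv k (b, j)) ∈ S)
    exact .inr ⟨i', by rwa [Lsquare_comm], hmem⟩

end Lsquare

theorem Finset.card_eq_sum_card_slices {α β γ : Type*} [Fintype α] [Fintype β] [Fintype γ]
    [DecidableEq γ] (e : α × β ≃ γ) (S : Finset γ) :
    S.card = ∑ a, (univ.filter fun b => e (a, b) ∈ S).card := by
  calc S.card = ∑ x, if x ∈ S then 1 else 0 := by
        rw [sum_boole, Nat.cast_id, filter_mem_eq_inter, univ_inter]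
    _ = ∑ ab : α × β, if e ab ∈ S then 1 else 0 := (e.sum_comp _).symm
    _ = ∑ a, ∑ b, if e (a, b) ∈ S then 1 else 0 := Fintype.sum_prod_type _
    _ = _ := by simp only [card_filter]

def gdsCards (k : ℕ) : Set ℕ :=
  {c | ∃ S : Finset (Fin (2 ^ k) × Fin (2 ^ k)), IsRectGDS (Lsquare k) ↑S ∧ S.card = c}

theorem sInf_gdsCards_le {k : ℕ} {S : Finset (Fin (2 ^ k) × Fin (2 ^ k))}
    (hS : IsRectGDS (Lsquare k) ↑S) : sInf (gdsCards k) ≤ S.card :=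
  Nat.sInf_le ⟨S, hS, rfl⟩

theorem le_sInf_gdsCards {k n : ℕ}
    (h : ∀ S : Finset (Fin (2 ^ k) × Fin (2 ^ k)), IsRectGDS (Lsquare k) ↑S → n ≤ S.card) :
    n ≤ sInf (gdsCards k) := by
  have huniv : IsRectGDS (Lsquare k) ↑(univ : Finset (Fin (2 ^ k) × Fin (2 ^ k))) :=
    (isRectGDS_iff (Lsquare_isLatinRectangle k)).mpr fun p hp => (hp (mem_univ p)).elim
  obtain ⟨S, hS, hcard⟩ := Nat.sInf_mem (s := gdsCards k) ⟨_, univ, huniv, rfl⟩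
  exact hcard ▸ h S hS

theorem four_mul_sInf_gdsCards_le (k : ℕ) : 4 * sInf (gdsCards k) ≤ sInf (gdsCards (k + 1)) := by
  refine le_sInf_gdsCards fun S hS => ?_
  rw [card_eq_sum_card_slices (quadrantEquiv k) S]
  calc 4 * sInf (gdsCards k) = ∑ _q : Fin 2 × Fin 2, sInf (gdsCards k) := by simp [mul_comm]
    _ ≤ _ := sum_le_sum fun q _ => sInf_gdsCards_le (by
      rw [coe_filter_univ]
      exact hS.quadrantTrace q)

def forcingCells {m n : ℕ} (R : Fin m → Fin n → ℕ) (p : Fin m × Fin n) (c : ℕ) :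
    Finset (Fin m × Fin n) :=
  univ.filter fun u => u = p ∨ (u.1 = p.1 ∨ u.2 = p.2) ∧ R u.1 u.2 = c

theorem IsRectGDS.exists_mem_forcingCells {m n : ℕ} {R : Fin m → Fin n → ℕ}
    {S : Set (Fin m × Fin n)} (hR : IsLatinRectangle R) (hS : IsRectGDS R S)
    {p : Fin m × Fin n} {c : ℕ} (hc : c < R p.1 p.2) (hc₁ : 1 ≤ c)
    (hrow : ∀ j < p.2, R p.1 j ≠ c) (hcol : ∀ i < p.1, R i p.2 ≠ c) :
    ∃ u ∈ forcingCells R p c, u ∈ S := by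
  by_cases hp : p ∈ S
  · exact ⟨p, by simp [forcingCells], hp⟩
  rcases (isRectGDS_iff hR).mp hS p hp c hc hc₁ with ⟨j, hj, hjS | hjp⟩ | ⟨i, hi, hiS | hip⟩
  · exact ⟨(p.1, j), by simp [forcingCells, hj], hjS⟩
  · exact (hrow j hjp hj).elim
  · exact ⟨(i, p.2), by simp [forcingCells, hi], hiS⟩
  · exact (hcol i hip hi).elim

theorem Lsquare_two_forcing_transversals :
    ∀ x₁ ∈ forcingCells (Lsquare 2) (0, 0) 1, ∀ x₂ ∈ forcingCells (Lsquare 2) (0, 1) 2,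
    ∀ x₃ ∈ forcingCells (Lsquare 2) (1, 0) 2, ∀ x₄ ∈ forcingCells (Lsquare 2) (1, 1) 1,
    ∀ x₅ ∈ forcingCells (Lsquare 2) (2, 2) 3,
      ({x₁, x₂, x₃, x₄, x₅} : Finset _).card = 5 ∧
      ¬ ∀ p ∉ ({x₁, x₂, x₃, x₄, x₅} : Finset _), ∀ c < Lsquare 2 p.1 p.2, 1 ≤ c →
        ColorBlocked (Lsquare 2) ↑({x₁, x₂, x₃, x₄, x₅} : Finset _) p c := by
  decide

theorem six_le_card_of_isRectGDS_Lsquare_two {S : Finset (Fin (2 ^ 2) × Fin (2 ^ 2))}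
    (hS : IsRectGDS (Lsquare 2) ↑S) : 6 ≤ S.card := by
  have hL := Lsquare_isLatinRectangle 2
  obtain ⟨x₁, h₁, hx₁⟩ := hS.exists_mem_forcingCells hL (p := (0, 0)) (c := 1)
    (by decide) le_rfl (by decide) (by decide)
  obtain ⟨x₂, h₂, hx₂⟩ := hS.exists_mem_forcingCells hL (p := (0, 1)) (c := 2)
    (by decide) (by decide) (by decide) (by decide)
  obtain ⟨x₃, h₃, hx₃⟩ := hS.exists_mem_forcingCells hL (p := (1, 0)) (c := 2)
    (by decide) (by decide) (by decide) (by decide)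
  obtain ⟨x₄, h₄, hx₄⟩ := hS.exists_mem_forcingCells hL (p := (1, 1)) (c := 1)
    (by decide) le_rfl (by decide) (by decide)
  obtain ⟨x₅, h₅, hx₅⟩ := hS.exists_mem_forcingCells hL (p := (2, 2)) (c := 3)
    (by decide) (by decide) (by decide) (by decide)
  obtain ⟨hcard, hnot⟩ := Lsquare_two_forcing_transversals x₁ h₁ x₂ h₂ x₃ h₃ x₄ h₄ x₅ h₅
  have hsub : {x₁, x₂, x₃, x₄, x₅} ⊆ S := by
    simp only [insert_subset_iff, singleton_subset_iff]
    exact ⟨hx₁, hx₂, hx₃, hx₄, hx₅⟩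
  by_contra hlt
  obtain rfl := eq_of_subset_of_card_le hsub (by omega)
  exact hnot ((isRectGDS_iff hL).mp hS)

def gds₆ : Finset (Fin (2 ^ 2) × Fin (2 ^ 2)) := {(0, 0), (0, 1), (1, 1), (1, 2), (2, 0), (2, 2)}

theorem isRectGDS_gds₆ : IsRectGDS (Lsquare 2) ↑gds₆ :=
  (isRectGDS_iff (Lsquare_isLatinRectangle 2)).mpr (by decide)

/-- Let `m_k` be the minimum cardinality of a greedy defining set of
`(L_k, lex)`.  Then `m_k ≥ 4·m_(k-1)` for all `k ≥ 1`, and `m_2 = 6`. -/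
theorem Lk_min_gds_recurrence (m : ℕ → ℕ)
    (hm : ∀ k, m k = sInf {c : ℕ | ∃ S : Finset (Fin (2 ^ k) × Fin (2 ^ k)),
      IsRectGDS (Lsquare k) ↑S ∧ S.card = c}) :
    (∀ k, 1 ≤ k → 4 * m (k - 1) ≤ m k) ∧ m 2 = 6 := by
  change ∀ k, m k = sInf (gdsCards k) at hm
  refine ⟨fun k hk => ?_, ?_⟩
  · obtain ⟨k, rfl⟩ := Nat.exists_eq_add_of_le' hk
    rw [hm, hm, Nat.add_sub_cancel]
    exact four_mul_sInf_gdsCards_le k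
  · rw [hm]
    exact le_antisymm (sInf_gdsCards_le isRectGDS_gds₆)
      (le_sInf_gdsCards fun _ => six_le_card_of_isRectGDS_Lsquare_two)
end
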